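/- arXiv:2307.12895 — 4 statements merged into one kernel-verified Lean document; each statement's English description precedes it below -/
import Mathlib

section
/- Let Ω ⊂ ℝ^N be a bounded open set, f ∈ L²(Ω), and let u be a minimizer over X(Ω) = { 1-Lipschitz functions on Ω } of J_∞(v) = (1/2)∫_Ω (v - f)². If the set A⁻ = supp (u - f)⁻ has positive Lebesgue measure and A⁺ = supp (u - f)⁺ has measure zero, then a contradiction arises; more precisely, if |A⁺| = 0 and |A⁻| > 0 then for sufficiently small ε > 0 the competitor u + ε satisfies J_∞(u + ε) < J_∞(u). Consequently, if f ∉ X(Ω) then both A⁺ and A⁻ are nonnegligible. -/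
open MeasureTheory

-- membership of a Lipschitz-on function in L2 on a bounded set
lemma lip_memL2 {N : ℕ} {Ω : Set (EuclideanSpace ℝ (Fin N))}
    (hΩo : IsOpen Ω) (hΩb : Bornology.IsBounded Ω)
    {u : EuclideanSpace ℝ (Fin N) → ℝ} (hu : LipschitzOnWith 1 u Ω) (hne : Ω.Nonempty) :
    MemLp u 2 (volume.restrict Ω) := by
  have hΩm : MeasurableSet Ω := hΩo.measurableSet
  have hfin : volume Ω < ⊤ := hΩb.measure_lt_top
  haveI : IsFiniteMeasure (volume.restrict Ω) :=
    ⟨by rwa [Measure.restrict_apply_univ]⟩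
  obtain ⟨x₀, hx₀⟩ := hne
  obtain ⟨R, hR⟩ := hΩb.subset_closedBall x₀
  refine MemLp.of_bound ((hu.continuousOn).aestronglyMeasurable hΩm) (|u x₀| + R) ?_
  filter_upwards [ae_restrict_mem hΩm] with x hx
  have h1 : dist (u x) (u x₀) ≤ dist x x₀ := by
    have := hu.dist_le_mul x hx x₀ hx₀
    simpa using this
  have h2 : dist x x₀ ≤ R := by
    have := hR hx
    simpa [Metric.mem_closedBall] using this
  have := abs_sub_abs_le_abs_sub (u x) (u x₀)
  rw [Real.norm_eq_abs]
  rw [Real.dist_eq] at h1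
  linarith

lemma better {N : ℕ} {Ω : Set (EuclideanSpace ℝ (Fin N))}
    (hΩo : IsOpen Ω) (hΩb : Bornology.IsBounded Ω)
    {f u : EuclideanSpace ℝ (Fin N) → ℝ}
    (hf : MemLp f 2 (volume.restrict Ω))
    (hu : LipschitzOnWith 1 u Ω)
    (h0 : volume (Ω ∩ {x | f x < u x}) = 0)
    (h1 : 0 < volume (Ω ∩ {x | u x < f x})) :
    ∃ ε₀ > (0:ℝ), ∀ ε : ℝ, 0 < ε → ε < ε₀ →
      (1/2) * ∫ x in Ω, (u x + ε - f x)^2 < (1/2) * ∫ x in Ω, (u x - f x)^2 := by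
  have hΩm : MeasurableSet Ω := hΩo.measurableSet
  have hfin : volume Ω < ⊤ := hΩb.measure_lt_top
  set μ := volume.restrict Ω with hμ
  haveI : IsFiniteMeasure μ := ⟨by rw [hμ, Measure.restrict_apply_univ]; exact hfin⟩
  have hne : Ω.Nonempty := by
    rcases Set.eq_empty_or_nonempty Ω with h | h
    · simp [h] at h1
    · exact h
  have huL2 : MemLp u 2 μ := lip_memL2 hΩo hΩb hu hne
  have hgL2 : MemLp (fun x => u x - f x) 2 μ := huL2.sub hf
  have hgint : Integrable (fun x => u x - f x) μ := hgL2.integrable one_le_two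
  have hg2int : Integrable (fun x => (u x - f x)^2) μ := hgL2.integrable_sq
  -- a.e. u ≤ f on Ω
  have hae : ∀ᵐ x ∂μ, u x ≤ f x := by
    have h0' : ∀ᵐ x ∂volume, x ∉ Ω ∩ {x | f x < u x} := by
      rw [ae_iff]; simp only [not_not, Set.setOf_mem_eq]; exact h0
    have := ae_restrict_of_ae (μ := volume) (s := Ω) h0'
    filter_upwards [this, ae_restrict_mem hΩm] with x hx hxΩ
    by_contra hlt
    exact hx ⟨hxΩ, by simpa using lt_of_not_ge hlt⟩
  set I : ℝ := ∫ x, (u x - f x) ∂μ with hI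
  have hIneg : I < 0 := by
    have hnn : 0 ≤ᵐ[μ] fun x => f x - u x := by
      filter_upwards [hae] with x hx; simp [sub_nonneg, hx]
    have hint : Integrable (fun x => f x - u x) μ := (hf.sub huL2).integrable one_le_two
    have hpos : 0 < ∫ x, (f x - u x) ∂μ := by
      rcases lt_or_eq_of_le (integral_nonneg_of_ae hnn) with h | h
      · exact h
      · exfalso
        have := (integral_eq_zero_iff_of_nonneg_ae hnn hint).mp h.symm
        have hnull : μ {x | u x < f x} = 0 := by
          have hsub : {x | u x < f x} ⊆ {x | (fun x => f x - u x) x ≠ 0} := by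
            intro x hx
            simp only [Set.mem_setOf_eq] at hx ⊢
            intro h'; linarith
          exact measure_mono_null hsub this
        rw [hμ, Measure.restrict_apply' hΩm, Set.inter_comm] at hnull
        exact absurd hnull h1.ne'
    have : I = -∫ x, (f x - u x) ∂μ := by
      rw [hI, ← integral_neg]
      congr 1 with x; ring
    linarith
  set M : ℝ := (volume Ω).toReal with hM
  have hMpos : 0 < M := by
    rw [hM, ENNReal.toReal_pos_iff]
    exact ⟨lt_of_lt_of_le h1 (measure_mono Set.inter_subset_left), hfin⟩
  refine ⟨-I / M, div_pos (by linarith) hMpos, fun ε hε hεlt => ?_⟩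
  have hexp : ∫ x, (u x + ε - f x)^2 ∂μ
      = ∫ x, (u x - f x)^2 ∂μ + (2 * ε * I + ε^2 * M) := by
    have heq : (fun x => (u x + ε - f x)^2)
        = fun x => (u x - f x)^2 + (2 * ε * (u x - f x) + ε^2) := by
      funext x; ring
    have h2 : ∫ x, (2*ε*(u x - f x) + ε^2) ∂μ = 2*ε*I + ε^2*M := by
      rw [integral_add (hgint.const_mul _) (integrable_const _), integral_const_mul, integral_const]
      simp only [hμ, measureReal_def, Measure.restrict_apply_univ, smul_eq_mul, ← hM, ← hI]
      rw [hI, hμ]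
      ring
    have hsum : Integrable (fun x => 2*ε*(u x - f x) + ε^2) μ :=
      (hgint.const_mul (2*ε)).add (integrable_const _)
    rw [heq, integral_add hg2int hsum, h2]
  rw [hμ] at hexp ⊢
  rw [hexp]
  have hεM : ε * M < -I := (lt_div_iff₀ hMpos).mp hεlt
  have : 2 * ε * I + ε^2 * M < 0 := by
    nlinarith [mul_lt_mul_of_pos_left hεM hε, mul_neg_of_pos_of_neg hε hIneg]
  linarith
/-- If `u` minimizes `J_∞` over the 1-Lipschitz class and the set where `u < f`
has positive measure while the set where `u > f` is null, then `u + ε` is a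
strictly better competitor for small `ε > 0` (a contradiction with minimality).
Consequently, if `f` does not agree a.e. with any 1-Lipschitz function, then both
`A⁺` and `A⁻` have positive measure. -/
theorem stmt3 {N : ℕ} (Ω : Set (EuclideanSpace ℝ (Fin N)))
    (hΩo : IsOpen Ω) (hΩb : Bornology.IsBounded Ω)
    (f u : EuclideanSpace ℝ (Fin N) → ℝ)
    (hf : MemLp f 2 (volume.restrict Ω))
    (hu : LipschitzOnWith 1 u Ω)
    (hmin : ∀ v : EuclideanSpace ℝ (Fin N) → ℝ, LipschitzOnWith 1 v Ω →
      (1/2) * ∫ x in Ω, (u x - f x)^2 ≤ (1/2) * ∫ x in Ω, (v x - f x)^2) :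
    ((volume (Ω ∩ {x | f x < u x}) = 0 ∧ 0 < volume (Ω ∩ {x | u x < f x})) →
      ∃ ε₀ > (0:ℝ), ∀ ε : ℝ, 0 < ε → ε < ε₀ →
        (1/2) * ∫ x in Ω, (u x + ε - f x)^2 < (1/2) * ∫ x in Ω, (u x - f x)^2)
    ∧
    ((¬ ∃ g : EuclideanSpace ℝ (Fin N) → ℝ, LipschitzOnWith 1 g Ω ∧
        f =ᵐ[volume.restrict Ω] g) →
      0 < volume (Ω ∩ {x | f x < u x}) ∧ 0 < volume (Ω ∩ {x | u x < f x})) := by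
  have hΩm : MeasurableSet Ω := hΩo.measurableSet
  constructor
  · rintro ⟨h0, h1⟩
    exact better hΩo hΩb hf hu h0 h1
  · intro hng
    by_cases hA : volume (Ω ∩ {x | f x < u x}) = 0
    · by_cases hB : volume (Ω ∩ {x | u x < f x}) = 0
      · -- f = u a.e. on Ω, contradiction
        exfalso
        apply hng
        refine ⟨u, hu, ?_⟩
        have hA' : ∀ᵐ x ∂volume, x ∉ Ω ∩ {x | f x < u x} := by
          rw [ae_iff]; simp only [not_not, Set.setOf_mem_eq]; exact hA
        have hB' : ∀ᵐ x ∂volume, x ∉ Ω ∩ {x | u x < f x} := by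
          rw [ae_iff]; simp only [not_not, Set.setOf_mem_eq]; exact hB
        filter_upwards [ae_restrict_of_ae hA', ae_restrict_of_ae hB', ae_restrict_mem hΩm]
          with x hxA hxB hxΩ
        by_contra hne
        rcases lt_or_gt_of_ne hne with h | h
        · exact hxA ⟨hxΩ, h⟩
        · exact hxB ⟨hxΩ, h⟩
      · -- u+ε beats u, contradicting minimality
        exfalso
        have hB1 : 0 < volume (Ω ∩ {x | u x < f x}) := pos_iff_ne_zero.mpr hB
        obtain ⟨ε₀, hε₀, hlt⟩ := better hΩo hΩb hf hu hA hB1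
        have hv : LipschitzOnWith 1 (fun x => u x + ε₀/2) Ω := by
          intro x hx y hy
          simpa [edist_add_right] using hu hx hy
        have := hmin _ hv
        exact absurd this (not_le.mpr (hlt (ε₀/2) (by linarith) (by linarith)))
    · -- symmetric case : apply `better` to (-f, -u)
      have hApos : 0 < volume (Ω ∩ {x | f x < u x}) := pos_iff_ne_zero.mpr hA
      refine ⟨hApos, ?_⟩
      by_contra hB
      have hB0 : volume (Ω ∩ {x | u x < f x}) = 0 := by
        by_contra h; exact hB (pos_iff_ne_zero.mpr h)
      have hf' : MemLp (fun x => -f x) 2 (volume.restrict Ω) := hf.neg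
      have hu' : LipschitzOnWith 1 (fun x => -u x) Ω := by
        intro x hx y hy
        simpa [edist_neg] using hu hx hy
      have hset0 : Ω ∩ {x | (fun x => -f x) x < (fun x => -u x) x} = Ω ∩ {x | u x < f x} := by
        ext x; simp
      have hset1 : Ω ∩ {x | (fun x => -u x) x < (fun x => -f x) x} = Ω ∩ {x | f x < u x} := by
        ext x; simp
      obtain ⟨ε₀, hε₀, hlt⟩ := better hΩo hΩb hf' hu' (by rw [hset0]; exact hB0)
        (by rw [hset1]; exact hApos)
      have key := hlt (ε₀/2) (by linarith) (by linarith)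
      have e1 : (fun x => ((fun x => -u x) x + ε₀/2 - (fun x => -f x) x)^2)
          = fun x => ((u x - ε₀/2) - f x)^2 := by funext x; ring
      have e2 : (fun x => ((fun x => -u x) x - (fun x => -f x) x)^2)
          = fun x => (u x - f x)^2 := by funext x; ring
      simp only [e1, e2] at key
      have hv : LipschitzOnWith 1 (fun x => u x - ε₀/2) Ω := by
        intro x hx y hy
        simpa [edist_sub_right] using hu hx hy
      have := hmin _ hv
      exact absurd this (not_le.mpr key)
end

section
/- Let f₂ : [-1,1] → ℝ be f₂(x) = 2|x| and let u₂(x) = |x| + 1/2. Then u₂ is the unique minimizer of J_∞(v) = (1/2)∫_{-1}^{1} (v - f₂)² over the set of 1-Lipschitz functions v on (-1,1); i.e., for every 1-Lipschitz v on (-1,1) with v ≠ u₂ on a set of positive measure, J_∞(v) > J_∞(u₂). -/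
open MeasureTheory

/-- For `f₂(x) = 2|x|` on `(-1,1)`, the function `u₂(x) = |x| + 1/2` is the
unique minimizer of `J_∞(v) = (1/2)∫_{-1}^1 (v - f₂)²` over the 1-Lipschitz
functions on `(-1,1)`. -/
theorem stmt7 (v : ℝ → ℝ)
    (hv : LipschitzOnWith 1 v (Set.Ioo (-1 : ℝ) 1))
    (hne : 0 < volume {x ∈ Set.Ioo (-1 : ℝ) 1 | v x ≠ |x| + 1/2}) :
    (1/2) * ∫ x in Set.Ioo (-1 : ℝ) 1, (|x| + 1/2 - 2*|x|)^2 <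
      (1/2) * ∫ x in Set.Ioo (-1 : ℝ) 1, (v x - 2*|x|)^2 := by
  set I : Set ℝ := Set.Ioo (-1 : ℝ) 1 with hIdef
  have hmeasI : MeasurableSet I := measurableSet_Ioo
  have hvc : ContinuousOn v I := hv.continuousOn
  have h0I : (0:ℝ) ∈ I := by constructor <;> norm_num
  have hlip : ∀ x ∈ I, ∀ y ∈ I, |v x - v y| ≤ |x - y| := by
    intro x hx y hy
    have h := hv.dist_le_mul x hx y hy
    simpa [Real.dist_eq] using h
  have habsx : ∀ x ∈ I, |x| ≤ 1 := fun x hx => by rw [abs_le]; exact ⟨hx.1.le, hx.2.le⟩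
  have hvb : ∀ x ∈ I, |v x| ≤ |v 0| + 1 := by
    intro x hx
    have h := hlip x hx 0 h0I
    have hx1 := habsx x hx
    have h2 := abs_sub_abs_le_abs_sub (v x) (v 0)
    simp only [sub_zero] at h
    linarith
  -- integrability helper
  have hint : ∀ (f : ℝ → ℝ), ContinuousOn f I → (∃ C, ∀ x ∈ I, |f x| ≤ C) → IntegrableOn f I := by
    rintro f hf ⟨C, hC⟩
    refine ⟨hf.aestronglyMeasurable hmeasI,
      HasFiniteIntegral.restrict_of_bounded (C := C) measure_Ioo_lt_top ?_⟩
    filter_upwards [ae_restrict_mem hmeasI] with x hx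
    simpa [Real.norm_eq_abs] using hC x hx
  set w : ℝ → ℝ := fun x => v x - (|x| + 1/2) with hwdef
  set g : ℝ → ℝ := fun x => w x * (1/2 - |x|) with hgdef
  have hwb : ∀ x ∈ I, |w x| ≤ |v 0| + 3 := by
    intro x hx
    have h1 := hvb x hx
    have h2 := habsx x hx
    have h3 := abs_nonneg x
    rw [abs_le] at h1 ⊢
    simp only [hwdef]
    constructor <;> linarith
  have hwc : ContinuousOn w I := hvc.sub ((continuous_abs.add continuous_const).continuousOn)
  have int1 : IntegrableOn (fun x => (|x| + 1/2 - 2*|x|)^2) I := by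
    refine hint _ (by fun_prop) ⟨9, fun x hx => ?_⟩
    have h2 := habsx x hx
    have h3 := abs_nonneg x
    rw [abs_of_nonneg (sq_nonneg _)]
    nlinarith
  have int2 : IntegrableOn (fun x => (v x - 2*|x|)^2) I := by
    refine hint _ (by fun_prop) ⟨(|v 0| + 3)^2, fun x hx => ?_⟩
    have h1 := hvb x hx
    have h2 := habsx x hx
    have h3 := abs_nonneg x
    rw [abs_le] at h1
    rw [abs_of_nonneg (sq_nonneg _)]
    nlinarith [abs_nonneg (v 0)]
  have intw2 : IntegrableOn (fun x => (w x)^2) I := by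
    refine hint _ (hwc.pow 2) ⟨(|v 0| + 3)^2, fun x hx => ?_⟩
    have h1 := hwb x hx
    rw [abs_of_nonneg (sq_nonneg _)]
    nlinarith [abs_nonneg (w x), le_abs_self (w x), neg_abs_le (w x), abs_nonneg (v 0)]
  have intg : IntegrableOn g I := by
    refine hint _ (hwc.mul (by fun_prop)) ⟨(|v 0| + 3) * 2, fun x hx => ?_⟩
    have h1 := hwb x hx
    have h2 := habsx x hx
    have h3 := abs_nonneg x
    simp only [hgdef]
    rw [abs_mul]
    have h4 : abs ((1:ℝ)/2 - |x|) ≤ 2 := by rw [abs_le]; constructor <;> linarith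
    have := abs_nonneg (w x)
    nlinarith
  -- expansion
  have hsplit : ∫ x in I, (v x - 2*|x|)^2 =
      (∫ x in I, (|x| + 1/2 - 2*|x|)^2) + ((∫ x in I, (w x)^2) + 2 * ∫ x in I, g x) := by
    have hexp : ∀ x, (v x - 2*|x|)^2 = (|x| + 1/2 - 2*|x|)^2 + ((w x)^2 + 2 * g x) := by
      intro x; simp only [hwdef, hgdef]; ring
    calc ∫ x in I, (v x - 2*|x|)^2
        = ∫ x in I, ((|x| + 1/2 - 2*|x|)^2 + ((w x)^2 + 2 * g x)) :=
          integral_congr_ae (Filter.Eventually.of_forall fun x => hexp x)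
      _ = (∫ x in I, (|x| + 1/2 - 2*|x|)^2) + ∫ x in I, ((w x)^2 + 2 * g x) :=
          integral_add int1 (intw2.add (intg.const_mul 2))
      _ = (∫ x in I, (|x| + 1/2 - 2*|x|)^2) + ((∫ x in I, (w x)^2) + ∫ x in I, 2 * g x) := by
          rw [integral_add intw2 (intg.const_mul 2)]
      _ = (∫ x in I, (|x| + 1/2 - 2*|x|)^2) + ((∫ x in I, (w x)^2) + 2 * ∫ x in I, g x) := by
          rw [integral_const_mul]
  -- positivity of ∫ w²
  have hA : 0 < ∫ x in I, (w x)^2 := by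
    rw [setIntegral_pos_iff_support_of_nonneg_ae
      (Filter.Eventually.of_forall fun x => sq_nonneg _) intw2]
    refine lt_of_lt_of_le hne (measure_mono ?_)
    rintro x ⟨hxI, hxne⟩
    refine ⟨?_, hxI⟩
    simp only [Function.mem_support, hwdef]
    intro hc
    exact hxne (by nlinarith [sq_nonneg (v x - (|x| + 1/2))])
  -- monotonicity of w
  have hmono : ∀ x ∈ Set.Ioo (0:ℝ) 1, ∀ y ∈ Set.Ioo (0:ℝ) 1, x ≤ y → w y ≤ w x := by
    intro x hx y hy hxy
    have hxI : x ∈ I := ⟨by linarith [hx.1], hx.2⟩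
    have hyI : y ∈ I := ⟨by linarith [hy.1], hy.2⟩
    have h := hlip y hyI x hxI
    have h1 : v y - v x ≤ |v y - v x| := le_abs_self _
    have h2 : |y - x| = y - x := abs_of_nonneg (by linarith)
    simp only [hwdef, abs_of_pos hx.1, abs_of_pos hy.1]
    linarith
  have hmono' : ∀ x ∈ Set.Ioo (-1:ℝ) 0, ∀ y ∈ Set.Ioo (-1:ℝ) 0, x ≤ y → w x ≤ w y := by
    intro x hx y hy hxy
    have hxI : x ∈ I := ⟨hx.1, by linarith [hx.2]⟩
    have hyI : y ∈ I := ⟨hy.1, by linarith [hy.2]⟩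
    have h := hlip y hyI x hxI
    have h1 : v x - v y ≤ |v y - v x| := by rw [abs_sub_comm]; exact le_abs_self _
    have h2 : |y - x| = y - x := abs_of_nonneg (by linarith)
    simp only [hwdef, abs_of_neg hx.2, abs_of_neg hy.2]
    linarith
  -- the two halves of B
  have hsub1 : Set.Ioo (0:ℝ) 1 ⊆ I := Set.Ioo_subset_Ioo (by norm_num) le_rfl
  have hsub2 : Set.Ioo (-1:ℝ) 0 ⊆ I := Set.Ioo_subset_Ioo le_rfl (by norm_num)
  have hhalf : (1/2:ℝ) ∈ Set.Ioo (0:ℝ) 1 := by constructor <;> norm_num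
  have hnhalf : (-1/2:ℝ) ∈ Set.Ioo (-1:ℝ) 0 := by constructor <;> norm_num
  have hBpos : 0 ≤ ∫ x in Set.Ioo (0:ℝ) 1, g x := by
    have hge : ∀ x ∈ Set.Ioo (0:ℝ) 1, w (1/2) * (1/2 - x) ≤ g x := by
      intro x hx
      simp only [hgdef, abs_of_pos hx.1]
      rcases le_total x (1/2) with h | h
      · have hw := hmono x hx (1/2) hhalf h
        nlinarith
      · have hw := hmono (1/2) hhalf x hx h
        nlinarith
    have intl : IntegrableOn (fun x => w (1/2) * (1/2 - x)) (Set.Ioo (0:ℝ) 1) :=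
      (((continuous_const.mul (continuous_const.sub continuous_id)).integrableOn_Icc
        (a := 0) (b := 1)).mono_set Set.Ioo_subset_Icc_self)
    have hmono_int := setIntegral_mono_on intl (intg.mono_set hsub1) measurableSet_Ioo hge
    have hzero : ∫ x in Set.Ioo (0:ℝ) 1, w (1/2) * (1/2 - x) = 0 := by
      rw [← integral_Ioc_eq_integral_Ioo, ← intervalIntegral.integral_of_le (by norm_num : (0:ℝ) ≤ 1)]
      rw [intervalIntegral.integral_const_mul]
      rw [intervalIntegral.integral_sub intervalIntegrable_const intervalIntegral.intervalIntegrable_id]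
      simp [integral_id]
    linarith
  have hBneg : 0 ≤ ∫ x in Set.Ioo (-1:ℝ) 0, g x := by
    have hge : ∀ x ∈ Set.Ioo (-1:ℝ) 0, w (-1/2) * (1/2 + x) ≤ g x := by
      intro x hx
      simp only [hgdef, abs_of_neg hx.2]
      rcases le_total x (-1/2) with h | h
      · have hw := hmono' x hx (-1/2) hnhalf h
        nlinarith
      · have hw := hmono' (-1/2) hnhalf x hx h
        nlinarith
    have intl : IntegrableOn (fun x => w (-1/2) * (1/2 + x)) (Set.Ioo (-1:ℝ) 0) :=
      (((continuous_const.mul (continuous_const.add continuous_id)).integrableOn_Icc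
        (a := -1) (b := 0)).mono_set Set.Ioo_subset_Icc_self)
    have hmono_int := setIntegral_mono_on intl (intg.mono_set hsub2) measurableSet_Ioo hge
    have hzero : ∫ x in Set.Ioo (-1:ℝ) 0, w (-1/2) * (1/2 + x) = 0 := by
      rw [← integral_Ioc_eq_integral_Ioo,
        ← intervalIntegral.integral_of_le (by norm_num : (-1:ℝ) ≤ 0)]
      rw [intervalIntegral.integral_const_mul]
      rw [intervalIntegral.integral_add intervalIntegrable_const intervalIntegral.intervalIntegrable_id]
      rw [intervalIntegral.integral_const, integral_id]
      norm_num
    linarith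
  -- split B
  have hB : 0 ≤ ∫ x in I, g x := by
    have i1 : IntervalIntegrable g volume (-1) 0 := by
      rw [intervalIntegrable_iff_integrableOn_Ioc_of_le (by norm_num)]
      exact (intg.mono_set hsub2).congr_set_ae (MeasureTheory.Ioo_ae_eq_Ioc).symm
    have i2 : IntervalIntegrable g volume 0 1 := by
      rw [intervalIntegrable_iff_integrableOn_Ioc_of_le (by norm_num)]
      exact (intg.mono_set hsub1).congr_set_ae (MeasureTheory.Ioo_ae_eq_Ioc).symm
    have hadd := intervalIntegral.integral_add_adjacent_intervals i1 i2
    have e0 : ∫ x in I, g x = ∫ x in (-1:ℝ)..1, g x := by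
      rw [intervalIntegral.integral_of_le (by norm_num : (-1:ℝ) ≤ 1), integral_Ioc_eq_integral_Ioo]
    have e1 : ∫ x in (-1:ℝ)..0, g x = ∫ x in Set.Ioo (-1:ℝ) 0, g x := by
      rw [intervalIntegral.integral_of_le (by norm_num : (-1:ℝ) ≤ 0), integral_Ioc_eq_integral_Ioo]
    have e2 : ∫ x in (0:ℝ)..1, g x = ∫ x in Set.Ioo (0:ℝ) 1, g x := by
      rw [intervalIntegral.integral_of_le (by norm_num : (0:ℝ) ≤ 1), integral_Ioc_eq_integral_Ioo]
    rw [e0, ← hadd, e1, e2]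
    linarith
  linarith
end

section
/- Let k > 0, R > r > 0 with r + k/2 ≤ R, and on (-R,R) let f(x) = k·χ_{(-r,r)}(x) and u(x) = min{ (r + k/2 - |x|)₊ , k } (with r > k/2). Then (1/2)∫_{-R}^{R} (u - f)² dx = k³/12. -/
/-!
The error `u - f` depends only on `|x|`, and as a function of `s = |x|` its absolute value is
the tent of half-width `k/2` centred at `s = r`: `u` is the ramp of slope one that crosses the
jump of `f` at `r` halfway up. Unfolding `|x|` and translating the tent to the origin, the energy
is half of twice `∫ (k/2 - |t|)₊² dt = 2 (k/2)³ / 3`.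
-/

open MeasureTheory intervalIntegral

open Set

def tent (a t : ℝ) : ℝ := max (a - |t|) 0

theorem tent_eq_zero {a t : ℝ} (h : a ≤ |t|) : tent a t = 0 :=
  max_eq_right (sub_nonpos.mpr h)

theorem integral_tent_pow {a : ℝ} (ha : 0 ≤ a) {n : ℕ} (hn : n ≠ 0) :
    ∫ t, tent a t ^ n = 2 * a ^ (n + 1) / (n + 1) := by
  have h := integral_comp_abs (f := fun s => max (a - s) 0 ^ n)
  simp only [tent]
  rw [h, setIntegral_eq_of_subset_of_forall_sdiff_eq_zero (s := Ioc 0 a) measurableSet_Ioi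
      Ioc_subset_Ioi_self, ← integral_of_le ha]
  · rw [integral_congr (g := fun s => (a - s) ^ n), integral_comp_sub_left (fun s => s ^ n)]
    · simp only [sub_self, sub_zero, integral_pow]
      rw [zero_pow (Nat.succ_ne_zero n)]
      ring
    · intro s hs
      rw [uIcc_of_le ha] at hs
      simp only [max_eq_left (sub_nonneg.mpr hs.2)]
  · rintro s ⟨hs0, hsa⟩
    have : a < s := by simpa [mem_Ioi.mp hs0] using hsa
    simp only [max_eq_right (by linarith : a - s ≤ 0), zero_pow hn]

theorem sq_min_max_sub_indicator {k : ℝ} (hk : 0 ≤ k) (r x : ℝ) :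
    (min (max (r + k/2 - |x|) 0) k - indicator (Ioo (-r) r) (fun _ => k) x) ^ 2 =
      tent (k/2) (|x| - r) ^ 2 := by
  rw [tent]
  by_cases hx : |x| < r
  · rw [indicator_of_mem (show x ∈ Ioo (-r) r from abs_lt.mp hx), abs_of_neg (sub_neg.mpr hx),
      max_eq_left (by linarith : 0 ≤ r + k/2 - |x|)]
    rcases le_total (r + k/2 - |x|) k with h | h
    · rw [min_eq_left h, max_eq_left (by linarith)]
      ring
    · rw [min_eq_right h, max_eq_right (by linarith)]
      ring
  · have hx : r ≤ |x| := not_lt.mp hx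
    rw [indicator_of_notMem (show x ∉ Ioo (-r) r from fun h => hx.not_gt (abs_lt.mpr h)),
      abs_of_nonneg (sub_nonneg.mpr hx), min_eq_left (max_le (by linarith) hk), sub_zero,
      show r + k/2 - |x| = k/2 - (|x| - r) by ring]

theorem stmt16_general (k r R : ℝ) (hk : 0 < k)
    (hRk : r + k/2 ≤ R) (hkr : k/2 < r) :
    (1/2) * ∫ x in (-R)..R,
      (min (max (r + k/2 - |x|) 0) k -
        Set.indicator (Set.Ioo (-r) r) (fun _ => k) x)^2 = k^3/12 := by
  calc (1/2) * ∫ x in (-R)..R, (min (max (r + k/2 - |x|) 0) k -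
        Set.indicator (Set.Ioo (-r) r) (fun _ => k) x)^2
      = (1/2) * ∫ x in (-R)..R, tent (k/2) (|x| - r) ^ 2 := by
        simp only [sq_min_max_sub_indicator hk.le]
    _ = (1/2) * ∫ x, tent (k/2) (|x| - r) ^ 2 := by
        rw [integral_of_le (by linarith), setIntegral_eq_integral_of_forall_compl_eq_zero]
        intro x hx
        have : R ≤ |x| := not_lt.mp fun h => hx (Ioo_subset_Ioc_self (abs_lt.mp h))
        rw [tent_eq_zero (le_abs.mpr (Or.inl (by linarith))), zero_pow two_ne_zero]
    _ = ∫ s in Ioi 0, tent (k/2) (s - r) ^ 2 := by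
        rw [integral_comp_abs (f := fun s => tent (k/2) (s - r) ^ 2)]
        ring
    _ = ∫ s, tent (k/2) (s - r) ^ 2 := by
        refine setIntegral_eq_integral_of_forall_compl_eq_zero fun s hs => ?_
        have : s ≤ 0 := not_lt.mp hs
        rw [tent_eq_zero (le_abs.mpr (Or.inr (by linarith))), zero_pow two_ne_zero]
    _ = k^3/12 := by
        rw [integral_sub_right_eq_self (fun s => tent (k/2) s ^ 2),
          integral_tent_pow (by linarith) two_ne_zero]
        ring

/-- Explicit value of the minimal energy in dimension one: with
`f = k·χ_{(-r,r)}` and `u = min{(r + k/2 - |x|)₊, k}` on `(-R,R)`,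
`(1/2)∫_{-R}^{R} (u - f)² dx = k³/12`. -/
theorem stmt16 (k r R : ℝ) (hk : 0 < k) (hr0 : 0 < r) (hrR : r < R)
    (hRk : r + k/2 ≤ R) (hkr : k/2 < r) :
    (1/2) * ∫ x in (-R)..R,
      (min (max (r + k/2 - |x|) 0) k -
        Set.indicator (Set.Ioo (-r) r) (fun _ => k) x)^2 = k^3/12 :=
  stmt16_general k r R hk hRk hkr
end

section
/- Let Ω ⊂ ℝ^N be bounded open and f ∈ C(Ω̄). Define M = { v : Ω̄ → ℝ : v is 1-Lipschitz with respect to the geodesic distance on Ω, f ≤ v ≤ ‖f‖_∞ on Ω }. Then M is nonempty, and there exists ū ∈ M attaining α := inf{ ∫_Ω v : v ∈ M }; moreover such a minimizer is unique up to a.e. equality on Ω. -/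
open MeasureTheory

/-- The geodesic distance inside `Ω`: the infimum of the lengths of C¹ paths
joining `x` to `y` inside `Ω`. -/
noncomputable def geodesicDist {N : ℕ} (Ω : Set (EuclideanSpace ℝ (Fin N)))
    (x y : EuclideanSpace ℝ (Fin N)) : ℝ :=
  sInf {L : ℝ | ∃ γ : ℝ → EuclideanSpace ℝ (Fin N),
    ContDiffOn ℝ 1 γ (Set.Icc 0 1) ∧ γ 0 = x ∧ γ 1 = y ∧
    (∀ t ∈ Set.Icc (0:ℝ) 1, γ t ∈ Ω) ∧ L = ∫ t in (0:ℝ)..1, ‖deriv γ t‖}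

lemma geodesicDist_nonneg {N : ℕ} (Ω : Set (EuclideanSpace ℝ (Fin N)))
    (x y : EuclideanSpace ℝ (Fin N)) : 0 ≤ geodesicDist Ω x y := by
  apply Real.sInf_nonneg
  rintro L ⟨γ, -, -, -, -, rfl⟩
  exact intervalIntegral.integral_nonneg (by norm_num) (fun t _ => norm_nonneg _)

lemma geodesicDist_le_of_segment {N : ℕ} {Ω : Set (EuclideanSpace ℝ (Fin N))}
    {x y : EuclideanSpace ℝ (Fin N)} (h : segment ℝ x y ⊆ Ω) :
    geodesicDist Ω x y ≤ dist x y := by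
  have hbdd : BddBelow {L : ℝ | ∃ γ : ℝ → EuclideanSpace ℝ (Fin N),
      ContDiffOn ℝ 1 γ (Set.Icc 0 1) ∧ γ 0 = x ∧ γ 1 = y ∧
      (∀ t ∈ Set.Icc (0:ℝ) 1, γ t ∈ Ω) ∧ L = ∫ t in (0:ℝ)..1, ‖deriv γ t‖} := by
    refine ⟨0, ?_⟩
    rintro L ⟨γ, -, -, -, -, rfl⟩
    exact intervalIntegral.integral_nonneg (by norm_num) (fun t _ => norm_nonneg _)
  have hmem : dist x y ∈ {L : ℝ | ∃ γ : ℝ → EuclideanSpace ℝ (Fin N),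
      ContDiffOn ℝ 1 γ (Set.Icc 0 1) ∧ γ 0 = x ∧ γ 1 = y ∧
      (∀ t ∈ Set.Icc (0:ℝ) 1, γ t ∈ Ω) ∧ L = ∫ t in (0:ℝ)..1, ‖deriv γ t‖} := by
    refine ⟨fun t => x + t • (y - x), ?_, by simp, by simp, ?_, ?_⟩
    · exact (contDiff_const.add (contDiff_id.smul contDiff_const)).contDiffOn
    · intro t ht
      apply h
      rw [segment_eq_image' ℝ x y]
      exact ⟨t, ht, rfl⟩
    · have hderiv : ∀ t : ℝ, deriv (fun t : ℝ => x + t • (y - x)) t = y - x := by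
        intro t
        have := ((hasDerivAt_id t).smul_const (y - x)).const_add x
        simpa using this.deriv
      rw [intervalIntegral.integral_congr (g := fun _ => ‖y - x‖)
        (fun t _ => by rw [hderiv])]
      simp [dist_eq_norm, norm_sub_rev]
  exact csInf_le hbdd hmem

/-- Existence (via Arzelà–Ascoli) and uniqueness of the minimizer of
`v ↦ ∫_Ω v` over the obstacle class
`M = { v : v is 1-Lipschitz for the geodesic distance, f ≤ v ≤ ‖f‖_∞ on Ω }`. -/
theorem stmt19 {N : ℕ} (Ω : Set (EuclideanSpace ℝ (Fin N)))
    (hΩo : IsOpen Ω) (hΩb : Bornology.IsBounded Ω) (hΩne : Ω.Nonempty)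
    (f : EuclideanSpace ℝ (Fin N) → ℝ) (hf : ContinuousOn f (closure Ω))
    (B : ℝ) (hB : B = sSup ((fun x => |f x|) '' closure Ω))
    (M : Set (EuclideanSpace ℝ (Fin N) → ℝ))
    (hM : M = {v | (∀ x ∈ Ω, ∀ y ∈ Ω, |v x - v y| ≤ geodesicDist Ω x y) ∧
      ∀ x ∈ Ω, f x ≤ v x ∧ v x ≤ B}) :
    M.Nonempty ∧
    ∃ ubar ∈ M, (∀ v ∈ M, (∫ x in Ω, ubar x) ≤ ∫ x in Ω, v x) ∧
      ∀ v ∈ M, (∀ w ∈ M, (∫ x in Ω, v x) ≤ ∫ x in Ω, w x) →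
        v =ᵐ[volume.restrict Ω] ubar := by
  -- closure Ω is compact
  have hcpt : IsCompact (closure Ω) := hΩb.isCompact_closure
  have hne' : (closure Ω).Nonempty := hΩne.closure
  -- |f| attains bounds
  have habs : ContinuousOn (fun x => |f x|) (closure Ω) := hf.abs
  have hBdd : BddAbove ((fun x => |f x|) '' closure Ω) :=
    (hcpt.image_of_continuousOn habs).bddAbove
  have hfB : ∀ x ∈ closure Ω, |f x| ≤ B := by
    intro x hx
    rw [hB]
    exact le_csSup hBdd ⟨x, hx, rfl⟩
  have hfB' : ∀ x ∈ Ω, |f x| ≤ B := fun x hx => hfB x (subset_closure hx)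
  -- the constant B is in M
  have hBmem : (fun _ => B) ∈ M := by
    rw [hM]
    refine ⟨fun x _ y _ => by simpa using geodesicDist_nonneg Ω x y, fun x hx => ?_⟩
    exact ⟨le_trans (le_abs_self _) (hfB' x hx), le_refl _⟩
  have hMne : M.Nonempty := ⟨_, hBmem⟩
  -- values of members of M
  have hMprop : ∀ v ∈ M, (∀ x ∈ Ω, ∀ y ∈ Ω, |v x - v y| ≤ geodesicDist Ω x y) ∧
      ∀ x ∈ Ω, f x ≤ v x ∧ v x ≤ B := by
    intro v hv; rw [hM] at hv; exact hv
  -- lower bound -B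
  have hlow : ∀ v ∈ M, ∀ x ∈ Ω, -B ≤ v x := by
    intro v hv x hx
    have := (hMprop v hv).2 x hx
    have h1 : -B ≤ f x := neg_le_of_abs_le (hfB' x hx)
    linarith [this.1]
  -- the pointwise infimum
  set ubar : EuclideanSpace ℝ (Fin N) → ℝ :=
    fun x => sInf ((fun v => v x) '' M) with hubar
  have hval_ne : ∀ x, ((fun v : EuclideanSpace ℝ (Fin N) → ℝ => v x) '' M).Nonempty :=
    fun x => ⟨B, ⟨_, hBmem, rfl⟩⟩
  have hval_bdd : ∀ x ∈ Ω, BddBelow ((fun v : EuclideanSpace ℝ (Fin N) → ℝ => v x) '' M) := by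
    intro x hx
    refine ⟨-B, ?_⟩
    rintro r ⟨v, hv, rfl⟩
    exact hlow v hv x hx
  have hubar_le : ∀ v ∈ M, ∀ x ∈ Ω, ubar x ≤ v x := by
    intro v hv x hx
    exact csInf_le (hval_bdd x hx) ⟨v, hv, rfl⟩
  have hle_ubar : ∀ x ∈ Ω, f x ≤ ubar x := by
    intro x hx
    apply le_csInf (hval_ne x)
    rintro r ⟨v, hv, rfl⟩
    exact ((hMprop v hv).2 x hx).1
  -- ubar is in M
  have hubarM : ubar ∈ M := by
    rw [hM]
    constructor
    · intro x hx y hy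
      rw [abs_sub_le_iff]
      constructor
      · have h1 : ∀ v ∈ M, ubar x - geodesicDist Ω x y ≤ v y := by
          intro v hv
          have h2 := (hMprop v hv).1 x hx y hy
          have h3 := hubar_le v hv x hx
          have := abs_sub_le_iff.mp h2
          linarith [this.1]
        have : ubar x - geodesicDist Ω x y ≤ ubar y := by
          apply le_csInf (hval_ne y)
          rintro r ⟨v, hv, rfl⟩
          exact h1 v hv
        linarith
      · have h1 : ∀ v ∈ M, ubar y - geodesicDist Ω x y ≤ v x := by
          intro v hv
          have h2 := (hMprop v hv).1 x hx y hy
          have h3 := hubar_le v hv y hy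
          have := abs_sub_le_iff.mp h2
          linarith [this.2]
        have : ubar y - geodesicDist Ω x y ≤ ubar x := by
          apply le_csInf (hval_ne x)
          rintro r ⟨v, hv, rfl⟩
          exact h1 v hv
        linarith
    · intro x hx
      exact ⟨hle_ubar x hx, hubar_le _ hBmem x hx⟩
  -- members of M are continuous on Ω
  have hcont : ∀ v ∈ M, ContinuousOn v Ω := by
    intro v hv
    intro x hx
    obtain ⟨ε, hε, hball⟩ := Metric.isOpen_iff.mp hΩo x hx
    apply ContinuousAt.continuousWithinAt
    apply continuousAt_of_locally_lipschitz hε 1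
    intro y hy
    have hyΩ : y ∈ Ω := hball hy
    have hseg : segment ℝ y x ⊆ Ω := by
      apply subset_trans _ hball
      apply (convex_ball x ε).segment_subset hy (Metric.mem_ball_self hε)
    calc dist (v y) (v x) = |v y - v x| := by rw [Real.dist_eq]
      _ ≤ geodesicDist Ω y x := (hMprop v hv).1 y hyΩ x hx
      _ ≤ dist y x := geodesicDist_le_of_segment hseg
      _ = 1 * dist y x := (one_mul _).symm
  -- members of M are integrable on Ω
  have hfin : volume Ω < ⊤ := hΩb.measure_lt_top
  have : Fact (volume Ω < ⊤) := ⟨hfin⟩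
  have hinteg : ∀ v ∈ M, IntegrableOn v Ω := by
    intro v hv
    have hmeas : AEStronglyMeasurable v (volume.restrict Ω) :=
      ((hcont v hv).aemeasurable hΩo.measurableSet).aestronglyMeasurable
    apply Integrable.mono' (integrable_const B) hmeas
    rw [ae_restrict_iff' hΩo.measurableSet]
    filter_upwards with x hx
    rw [Real.norm_eq_abs, abs_le]
    exact ⟨hlow v hv x hx, ((hMprop v hv).2 x hx).2⟩
  refine ⟨hMne, ubar, hubarM, ?_, ?_⟩
  · intro v hv
    exact setIntegral_mono_on (hinteg _ hubarM) (hinteg v hv) hΩo.measurableSet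
      (fun x hx => hubar_le v hv x hx)
  · intro v hv hmin
    have h1 : (∫ x in Ω, v x) ≤ ∫ x in Ω, ubar x := hmin _ hubarM
    have h2 : (∫ x in Ω, ubar x) ≤ ∫ x in Ω, v x :=
      setIntegral_mono_on (hinteg _ hubarM) (hinteg v hv) hΩo.measurableSet
        (fun x hx => hubar_le v hv x hx)
    have heq : (∫ x in Ω, v x) = ∫ x in Ω, ubar x := le_antisymm h1 h2
    have hintd : Integrable (fun x => v x - ubar x) (volume.restrict Ω) :=
      (hinteg v hv).sub (hinteg _ hubarM)
    have hnn : 0 ≤ᵐ[volume.restrict Ω] (fun x => v x - ubar x) := by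
      rw [Filter.EventuallyLE, ae_restrict_iff' hΩo.measurableSet]
      filter_upwards with x hx
      simpa using hubar_le v hv x hx
    have hzero : (∫ x in Ω, (v x - ubar x)) = 0 := by
      rw [integral_sub (hinteg v hv) (hinteg _ hubarM)]
      linarith
    have := (integral_eq_zero_iff_of_nonneg_ae hnn hintd).mp hzero
    filter_upwards [this] with x hx
    have : v x - ubar x = 0 := hx
    linarith
end
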